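/- arXiv:1302.3492 — 2 statements merged into one kernel-verified Lean document; each statement's English description precedes it below -/
import Mathlib

section
/- Let U, X, Y be random variables on finite alphabets such that U ↔ X ↔ Y form a Markov chain in that order (i.e., U and Y are conditionally independent given X), where (X,Y) has joint pmf P_{XY} with full-support marginals. Then I(Y;U) ≤ s*(X;Y) · I(X;U), where I(·;·) denotes mutual information. -/
open scoped BigOperators

noncomputable section

/-- A probability mass function on a finite type, as a real-valued function. -/
def IsPMF {α : Type*} [Fintype α] (p : α → ℝ) : Prop :=
  (∀ a, 0 ≤ p a) ∧ ∑ a, p a = 1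

/-- Kullback–Leibler divergence `D(q ‖ p)` between pmfs on a finite type. -/
def klDiv {α : Type*} [Fintype α] (q p : α → ℝ) : ℝ :=
  ∑ a, q a * Real.logb 2 (q a / p a)

variable {𝓧 𝓨 : Type*} [Fintype 𝓧] [Fintype 𝓨]

/-- x-marginal of a joint pmf. -/
def margX (P : 𝓧 → 𝓨 → ℝ) (x : 𝓧) : ℝ := ∑ y, P x y

/-- y-marginal of a joint pmf. -/
def margY (P : 𝓧 → 𝓨 → ℝ) (y : 𝓨) : ℝ := ∑ x, P x y

/-- Output distribution of channel `P_{Y|X}` (from joint pmf `P`) driven by input `Q`. -/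
def chanOut (P : 𝓧 → 𝓨 → ℝ) (Q : 𝓧 → ℝ) (y : 𝓨) : ℝ :=
  ∑ x, Q x * (P x y / margX P x)

/-- `s*(X;Y)`, for `(X,Y)` with joint pmf `P`. -/
def sStar (P : 𝓧 → 𝓨 → ℝ) : ℝ :=
  sSup { r : ℝ | ∃ Q : 𝓧 → ℝ, IsPMF Q ∧ Q ≠ margX P ∧
    r = klDiv (chanOut P Q) (margY P) / klDiv Q (margX P) }

/-- Mutual information `I(X;Y)` of a joint pmf. -/
def mutualInfo (P : 𝓧 → 𝓨 → ℝ) : ℝ :=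
  ∑ x, ∑ y, P x y * Real.logb 2 (P x y / (margX P x * margY P y))

/-- swapped joint pmf, for `s*(Y;X)` etc. -/
def swap (P : 𝓧 → 𝓨 → ℝ) : 𝓨 → 𝓧 → ℝ := fun y x => P x y

/-- n-fold memoryless extension of a joint source. -/
def iid (P : 𝓧 → 𝓨 → ℝ) (n : ℕ) : (Fin n → 𝓧) → (Fin n → 𝓨) → ℝ :=
  fun xs ys => ∏ i, P (xs i) (ys i)

/-!
Condition on `U = u`: the Markov property says that the conditional law of `Y` given `U = u`
is the output of the channel `P_{Y|X}` driven by the conditional law of `X` given `U = u`.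
Both mutual informations are averages over `u` of the divergences of these conditional laws
from the marginals `P_Y` and `P_X`, so the defining inequality `D(Q_Y ‖ P_Y) ≤ s* D(Q_X ‖ P_X)`,
averaged over `u`, gives the claim. That `s*` is finite (so that `sSup` is not a
junk value) is the ordinary data processing inequality `D(Q_Y ‖ P_Y) ≤ D(Q_X ‖ P_X)`, which
follows from the log-sum inequality.
-/

open Real Finset
open InformationTheory (klFun klFun_apply klFun_nonneg klFun_eq_zero_iff)

section Gibbs

variable {p q : ℝ}

theorem mul_log_div_eq_sub_add_mul_klFun (hp : p ≠ 0) :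
    q * log (q / p) = q - p + p * klFun (q / p) := by
  rw [klFun_apply]
  field_simp
  ring

theorem sub_le_mul_log_div (hq : 0 ≤ q) (hp : 0 ≤ p) (hpq : p = 0 → q = 0) :
    q - p ≤ q * log (q / p) := by
  rcases hp.eq_or_lt with rfl | hp
  · simp [hpq rfl]
  · rw [mul_log_div_eq_sub_add_mul_klFun hp.ne']
    have := mul_nonneg hp.le (klFun_nonneg (div_nonneg hq hp.le))
    linarith

theorem sub_lt_mul_log_div (hq : 0 ≤ q) (hp : 0 < p) (hne : q ≠ p) :
    q - p < q * log (q / p) := by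
  rw [mul_log_div_eq_sub_add_mul_klFun hp.ne']
  have hk : klFun (q / p) ≠ 0 := by
    rwa [Ne, klFun_eq_zero_iff (div_nonneg hq hp.le), div_eq_one_iff_eq hp.ne']
  have := mul_pos hp ((klFun_nonneg (div_nonneg hq hp.le)).lt_of_ne' hk)
  linarith

end Gibbs

theorem sum_mul_log_div_sum_le {ι : Type*} (s : Finset ι) {a b : ι → ℝ}
    (ha : ∀ i ∈ s, 0 ≤ a i) (hb : ∀ i ∈ s, 0 ≤ b i) (hab : ∀ i ∈ s, b i = 0 → a i = 0) :
    (∑ i ∈ s, a i) * log ((∑ i ∈ s, a i) / ∑ i ∈ s, b i) ≤ ∑ i ∈ s, a i * log (a i / b i) := by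
  set A := ∑ i ∈ s, a i
  set B := ∑ i ∈ s, b i
  rcases (sum_nonneg ha).eq_or_lt with hA | hA
  · have ha0 := (sum_eq_zero_iff_of_nonneg ha).1 hA.symm
    rw [show A = 0 from hA.symm, zero_mul, sum_eq_zero fun i hi => by rw [ha0 i hi, zero_mul]]
  have hB : 0 < B := by
    refine (sum_nonneg hb).lt_of_ne fun hB => hA.ne' ?_
    have hb0 := (sum_eq_zero_iff_of_nonneg hb).1 hB.symm
    exact sum_eq_zero fun i hi => hab i hi (hb0 i hi)
  have hc : 0 < A / B := div_pos hA hB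
  have hterm : ∀ i ∈ s,
      a i * log (a i / (b i * (A / B))) = a i * log (a i / b i) - a i * log (A / B) := by
    intro i hi
    rcases (ha i hi).eq_or_lt with h | h
    · simp [← h]
    have hbi : b i ≠ 0 := fun h0 => h.ne' (hab i hi h0)
    rw [← div_div, log_div (div_ne_zero h.ne' hbi) hc.ne', mul_sub]
  have key : ∑ i ∈ s, (a i - b i * (A / B)) ≤ ∑ i ∈ s, a i * log (a i / (b i * (A / B))) :=
    sum_le_sum fun i hi => sub_le_mul_log_div (ha i hi) (mul_nonneg (hb i hi) hc.le)
      fun h0 => hab i hi ((mul_eq_zero.1 h0).resolve_right hc.ne')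
  rw [sum_congr rfl hterm, sum_sub_distrib, sum_sub_distrib, ← sum_mul, ← sum_mul,
    mul_div_cancel₀ _ hB.ne'] at key
  linarith

section KLDivergence

variable {α : Type*} [Fintype α]

theorem klDiv_eq_sum_mul_log_div (q p : α → ℝ) :
    klDiv q p = (∑ a, q a * log (q a / p a)) / log 2 := by
  simp only [klDiv, logb, sum_div, mul_div_assoc]

theorem klDiv_self (p : α → ℝ) : klDiv p p = 0 :=
  sum_eq_zero fun a _ => by rcases eq_or_ne (p a) 0 with h | h <;> simp [h]

theorem klDiv_pos {q p : α → ℝ} (hq : ∀ a, 0 ≤ q a) (hp : ∀ a, 0 < p a)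
    (hsum : ∑ a, p a ≤ ∑ a, q a) (hne : q ≠ p) : 0 < klDiv q p := by
  obtain ⟨a₀, ha₀⟩ := Function.ne_iff.1 hne
  have h : ∑ a, (q a - p a) < ∑ a, q a * log (q a / p a) :=
    sum_lt_sum (fun a _ => sub_le_mul_log_div (hq a) (hp a).le fun h => absurd h (hp a).ne')
      ⟨a₀, mem_univ _, sub_lt_mul_log_div (hq a₀) (hp a₀) ha₀⟩
  rw [sum_sub_distrib] at h
  rw [klDiv_eq_sum_mul_log_div]
  exact div_pos (by linarith) (log_pos one_lt_two)

theorem isPMF_div_sum {q : α → ℝ} (hq : ∀ a, 0 ≤ q a) (h : 0 < ∑ a, q a) :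
    IsPMF fun a => q a / ∑ a', q a' :=
  ⟨fun a => div_nonneg (hq a) h.le, by rw [← sum_div, div_self h.ne']⟩

theorem mutualInfo_eq_sum_mul_klDiv {β : Type*} [Fintype β] (M : α → β → ℝ)
    (hM : ∀ a b, 0 ≤ M a b) :
    mutualInfo M = ∑ b, margY M b * klDiv (fun a => M a b / margY M b) (margX M) := by
  simp only [mutualInfo, klDiv, mul_sum]
  rw [sum_comm]
  refine sum_congr rfl fun b _ => sum_congr rfl fun a _ => ?_
  have hb : 0 ≤ margY M b := sum_nonneg fun a _ => hM a b
  rcases hb.eq_or_lt with h | h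
  · have : M a b = 0 := (sum_eq_zero_iff_of_nonneg fun a _ => hM a b).1 h.symm a (mem_univ a)
    simp [this]
  · rw [div_div, mul_comm (margY M b) (margX M a), ← mul_assoc, mul_div_cancel₀ _ h.ne']

end KLDivergence

section Channel

variable (P : 𝓧 → 𝓨 → ℝ)

theorem sum_margX (hP : IsPMF fun p : 𝓧 × 𝓨 => P p.1 p.2) : ∑ x, margX P x = 1 := by
  rw [← hP.2, Fintype.sum_prod_type]
  rfl

theorem chanOut_margX (hX : ∀ x, 0 < margX P x) : chanOut P (margX P) = margY P :=
  funext fun _ => sum_congr rfl fun x _ => mul_div_cancel₀ _ (hX x).ne'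

theorem klDiv_chanOut_le (hP : ∀ x y, 0 ≤ P x y) (hX : ∀ x, 0 < margX P x) {Q : 𝓧 → ℝ}
    (hQ : ∀ x, 0 ≤ Q x) : klDiv (chanOut P Q) (margY P) ≤ klDiv Q (margX P) := by
  rw [klDiv_eq_sum_mul_log_div, klDiv_eq_sum_mul_log_div]
  refine div_le_div_of_nonneg_right ?_ (log_pos one_lt_two).le
  have hterm : ∀ x y, Q x * (P x y / margX P x) * log (Q x * (P x y / margX P x) / P x y)
      = Q x * log (Q x / margX P x) * (P x y / margX P x) := by
    intro x y
    rcases (hP x y).eq_or_lt with h | h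
    · simp [← h]
    rw [show Q x * (P x y / margX P x) / P x y = Q x / margX P x by field_simp]
    ring
  calc ∑ y, chanOut P Q y * log (chanOut P Q y / margY P y)
      ≤ ∑ y, ∑ x, Q x * (P x y / margX P x) * log (Q x * (P x y / margX P x) / P x y) :=
        sum_le_sum fun y _ => sum_mul_log_div_sum_le univ
          (fun x _ => mul_nonneg (hQ x) (div_nonneg (hP x y) (hX x).le)) (fun x _ => hP x y)
          fun x _ h => by simp [h]
    _ = ∑ x, Q x * log (Q x / margX P x) := by
        rw [sum_comm]
        refine sum_congr rfl fun x _ => ?_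
        rw [sum_congr rfl fun y _ => hterm x y, ← mul_sum, ← sum_div,
          show ∑ y, P x y = margX P x from rfl, div_self (hX x).ne', mul_one]

theorem klDiv_chanOut_le_sStar_mul (hP : IsPMF fun p : 𝓧 × 𝓨 => P p.1 p.2)
    (hX : ∀ x, 0 < margX P x) {Q : 𝓧 → ℝ} (hQ : IsPMF Q) :
    klDiv (chanOut P Q) (margY P) ≤ sStar P * klDiv Q (margX P) := by
  by_cases hQP : Q = margX P
  · rw [hQP, chanOut_margX P hX, klDiv_self, klDiv_self, mul_zero]
  have hD : ∀ {Q'}, IsPMF Q' → Q' ≠ margX P → 0 < klDiv Q' (margX P) := fun hQ' hne =>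
    klDiv_pos hQ'.1 hX (by rw [hQ'.2, sum_margX P hP]) hne
  rw [← div_le_iff₀ (hD hQ hQP)]
  refine le_csSup ⟨1, ?_⟩ ⟨Q, hQ, hQP, rfl⟩
  rintro _ ⟨Q', hQ', hne, rfl⟩
  exact (div_le_one (hD hQ' hne)).2 (klDiv_chanOut_le P (fun x y => hP.1 (x, y)) hX hQ'.1)

theorem chanOut_div_of_markov {𝓤 : Type*} (hX : ∀ x, 0 < margX P x) (J : 𝓤 → 𝓧 → 𝓨 → ℝ)
    (hMarkov : ∀ u x y, J u x y * margX P x = (∑ y', J u x y') * P x y) (u : 𝓤) (w : ℝ) :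
    chanOut P (fun x => (∑ y, J u x y) / w) = fun y => (∑ x, J u x y) / w := by
  funext y
  simp only [chanOut]
  rw [sum_div]
  refine sum_congr rfl fun x _ => ?_
  rw [div_mul_div_comm, ← hMarkov, mul_div_mul_right _ _ (hX x).ne']

end Channel

theorem strong_data_processing_general {𝓤 : Type*} [Fintype 𝓤]
    (P : 𝓧 → 𝓨 → ℝ) (hP : IsPMF (fun p : 𝓧 × 𝓨 => P p.1 p.2))
    (hX : ∀ x, 0 < margX P x)
    (J : 𝓤 → 𝓧 → 𝓨 → ℝ) (hJ : IsPMF (fun p : 𝓤 × 𝓧 × 𝓨 => J p.1 p.2.1 p.2.2))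
    (hMarg : ∀ x y, ∑ u, J u x y = P x y)
    (hMarkov : ∀ u x y, J u x y * margX P x = (∑ y', J u x y') * P x y) :
    mutualInfo (fun (y : 𝓨) (u : 𝓤) => ∑ x, J u x y)
      ≤ sStar P * mutualInfo (fun (x : 𝓧) (u : 𝓤) => ∑ y, J u x y) := by
  have hJ0 : ∀ u x y, 0 ≤ J u x y := fun u x y => hJ.1 (u, x, y)
  have hXU : margX (fun x u => ∑ y, J u x y) = margX P :=
    funext fun x => sum_comm.trans (sum_congr rfl fun y _ => hMarg x y)
  have hYU : margX (fun y u => ∑ x, J u x y) = margY P :=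
    funext fun y => sum_comm.trans (sum_congr rfl fun x _ => hMarg x y)
  have hU : margY (fun y u => ∑ x, J u x y) = margY (fun x u => ∑ y, J u x y) :=
    funext fun u => sum_comm
  rw [mutualInfo_eq_sum_mul_klDiv _ fun y u => sum_nonneg fun x _ => hJ0 u x y,
    mutualInfo_eq_sum_mul_klDiv _ fun x u => sum_nonneg fun y _ => hJ0 u x y,
    hXU, hYU, hU, mul_sum]
  refine sum_le_sum fun u _ => ?_
  have hw : 0 ≤ ∑ x, ∑ y, J u x y := sum_nonneg fun x _ => sum_nonneg fun y _ => hJ0 u x y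
  rcases hw.eq_or_lt with h | h
  · simp [margY, ← h]
  rw [← chanOut_div_of_markov P hX J hMarkov, mul_left_comm]
  exact mul_le_mul_of_nonneg_left (klDiv_chanOut_le_sStar_mul P hP hX
    (isPMF_div_sum (fun x => sum_nonneg fun y _ => hJ0 u x y) h)) h.le

/-- strong data processing inequality.  If `U ↔ X ↔ Y` is a Markov
chain (joint pmf `J` on `𝓤 × 𝓧 × 𝓨` with `(X,Y)`-marginal `P` and `U, Y`
conditionally independent given `X`), then `I(Y;U) ≤ s*(X;Y) ⬝ I(X;U)`. -/
theorem strong_data_processing {𝓤 : Type*} [Fintype 𝓤]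
    (P : 𝓧 → 𝓨 → ℝ) (hP : IsPMF (fun p : 𝓧 × 𝓨 => P p.1 p.2))
    (hX : ∀ x, 0 < margX P x) (hY : ∀ y, 0 < margY P y)
    (J : 𝓤 → 𝓧 → 𝓨 → ℝ) (hJ : IsPMF (fun p : 𝓤 × 𝓧 × 𝓨 => J p.1 p.2.1 p.2.2))
    (hMarg : ∀ x y, ∑ u, J u x y = P x y)
    (hMarkov : ∀ u x y, J u x y * margX P x = (∑ y', J u x y') * P x y) :
    mutualInfo (fun (y : 𝓨) (u : 𝓤) => ∑ x, J u x y)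
      ≤ sStar P * mutualInfo (fun (x : 𝓧) (u : 𝓤) => ∑ y, J u x y) :=
  strong_data_processing_general P hP hX J hJ hMarg hMarkov

end
end

section
/- Fix real numbers 0 < D_X, 0 < D_Y, and 0 ≤ ρ ≤ 1. Suppose R_X ≥ 0 and R_Y ≥ 0 satisfy R_X ≥ (1/2) log₂( (1/D_X)(1 − ρ² + ρ² 2^{−2R_Y}) ) and R_Y ≥ (1/2) log₂( (1/D_Y)(1 − ρ² + ρ² 2^{−2R_X}) ). Then R_X + R_Y ≥ (1/(1+ρ²)) · ( (1/2) log₂(1/D_X) + (1/2) log₂(1/D_Y) ). -/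
/-! By concavity of `log₂`, `log₂(1 - ρ² + ρ² 2^{-2S}) ≥ ρ² · (-2S)`, so each of Oohama's bounds
implies its linearisation `R_X + ρ² R_Y ≥ ½ log₂(1/D_X)` (and symmetrically). Adding the two
linear bounds gives `(1 + ρ²)(R_X + R_Y) ≥ ½ log₂(1/D_X) + ½ log₂(1/D_Y)`. -/

open Real

namespace Real

theorem rpow_le_one_sub_add_mul {a t : ℝ} (ha0 : 0 ≤ a) (ha1 : a ≤ 1) (ht : 0 ≤ t) :
    t ^ a ≤ 1 - a + a * t := by
  have h := rpow_one_add_le_one_add_mul_self (s := t - 1) (by linarith) ha0 ha1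
  rw [add_sub_cancel] at h
  linarith

theorem mul_le_logb_one_sub_add_mul_rpow {a b x : ℝ} (ha0 : 0 ≤ a) (ha1 : a ≤ 1) (hb : 1 < b) :
    a * x ≤ logb b (1 - a + a * b ^ x) := by
  have hbx : 0 < b ^ x := rpow_pos_of_pos (by linarith) x
  have hpow : (b ^ x) ^ a ≤ 1 - a + a * b ^ x := rpow_le_one_sub_add_mul ha0 ha1 hbx.le
  calc a * x = logb b ((b ^ x) ^ a) := by
        rw [← rpow_mul (by linarith), logb_rpow (by linarith) hb.ne', mul_comm]
    _ ≤ logb b (1 - a + a * b ^ x) := logb_le_logb_of_le hb (rpow_pos_of_pos hbx a) hpow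

end Real

theorem add_mul_ge_of_oohama_bound {D a R S : ℝ} (hD : D ≠ 0) (ha0 : 0 ≤ a) (ha1 : a ≤ 1)
    (hR : R ≥ (1 / 2) * logb 2 ((1 / D) * (1 - a + a * (2 : ℝ) ^ (-2 * S)))) :
    R + a * S ≥ (1 / 2) * logb 2 (1 / D) := by
  have hconcave := mul_le_logb_one_sub_add_mul_rpow (x := -2 * S) ha0 ha1 one_lt_two
  have hpos : 0 < 1 - a + a * (2 : ℝ) ^ (-2 * S) :=
    (rpow_pos_of_pos (rpow_pos_of_pos two_pos _) a).trans_le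
      (rpow_le_one_sub_add_mul ha0 ha1 (rpow_pos_of_pos two_pos _).le)
  rw [logb_mul (one_div_ne_zero hD) hpos.ne'] at hR
  linarith

theorem gaussian_sum_rate_bound_general (Dx Dy ρ Rx Ry : ℝ)
    (hDx : 0 < Dx) (hDy : 0 < Dy) (hρ0 : 0 ≤ ρ) (hρ1 : ρ ≤ 1)
    (hRx : Rx ≥ (1 / 2) * Real.logb 2 ((1 / Dx) * (1 - ρ ^ 2 + ρ ^ 2 * (2 : ℝ) ^ (-2 * Ry))))
    (hRy : Ry ≥ (1 / 2) * Real.logb 2 ((1 / Dy) * (1 - ρ ^ 2 + ρ ^ 2 * (2 : ℝ) ^ (-2 * Rx)))) :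
    Rx + Ry ≥ (1 / (1 + ρ ^ 2)) *
      ((1 / 2) * Real.logb 2 (1 / Dx) + (1 / 2) * Real.logb 2 (1 / Dy)) := by
  have hρsq0 : 0 ≤ ρ ^ 2 := sq_nonneg ρ
  have hρsq1 : ρ ^ 2 ≤ 1 := pow_le_one₀ hρ0 hρ1
  have hx := add_mul_ge_of_oohama_bound hDx.ne' hρsq0 hρsq1 hRx
  have hy := add_mul_ge_of_oohama_bound hDy.ne' hρsq0 hρsq1 hRy
  rw [ge_iff_le, one_div_mul_eq_div, div_le_iff₀ (by positivity)]
  linarith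

/-- For `0 < D_X`, `0 < D_Y`, `0 ≤ ρ ≤ 1`, any `R_X, R_Y ≥ 0`
satisfying Oohama's two rate bounds satisfies the sum-rate lower bound
`R_X + R_Y ≥ (1/(1+ρ²))·((1/2)log₂(1/D_X) + (1/2)log₂(1/D_Y))`. -/
theorem gaussian_sum_rate_bound (Dx Dy ρ Rx Ry : ℝ)
    (hDx : 0 < Dx) (hDy : 0 < Dy) (hρ0 : 0 ≤ ρ) (hρ1 : ρ ≤ 1)
    (hRx0 : 0 ≤ Rx) (hRy0 : 0 ≤ Ry)
    (hRx : Rx ≥ (1 / 2) * Real.logb 2 ((1 / Dx) * (1 - ρ ^ 2 + ρ ^ 2 * (2 : ℝ) ^ (-2 * Ry))))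
    (hRy : Ry ≥ (1 / 2) * Real.logb 2 ((1 / Dy) * (1 - ρ ^ 2 + ρ ^ 2 * (2 : ℝ) ^ (-2 * Rx)))) :
    Rx + Ry ≥ (1 / (1 + ρ ^ 2)) *
      ((1 / 2) * Real.logb 2 (1 / Dx) + (1 / 2) * Real.logb 2 (1 / Dy)) :=
  gaussian_sum_rate_bound_general Dx Dy ρ Rx Ry hDx hDy hρ0 hρ1 hRx hRy
end
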